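/- Let D be the trapezoidal fuzzy variable (a − α, a, b, b + β) with α > 0, β > 0, 0 < a − α, and a ≤ b, and let λ ∈ [0,1]. Then E_λ(1/D) = ∫_0^∞ m_λ(D ≤ 1/r) dr = (λ/α)·ln(a/(a − α)) + ((1 − λ)/β)·ln((b + β)/b). -/

import Mathlib

open MeasureTheory Set

/-- Possibility measure of an event `A` built from membership function `μ`
(with the convention `sSup ∅ = 0`, which holds for `Real.sSup`). -/
noncomputable def Pos (μ : ℝ → ℝ) (A : Set ℝ) : ℝ := sSup (μ '' A)

/-- Necessity measure associated with `μ`. -/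
noncomputable def Nec (μ : ℝ → ℝ) (A : Set ℝ) : ℝ := 1 - Pos μ Aᶜ

/-- The parametric measure `m_λ(A) = λ·Pos(A) + (1−λ)·Nec(A)`. -/
noncomputable def mMeas (l : ℝ) (μ : ℝ → ℝ) (A : Set ℝ) : ℝ :=
  l * Pos μ A + (1 - l) * Nec μ A

/-- The `m_λ`-expected value of the fuzzy variable with membership function `μ`:
`E_λ(ξ) = ∫_{−∞}^0 (m_λ([r,∞)) − 1) dr + ∫_0^∞ m_λ([r,∞)) dr`. -/
noncomputable def Eexp (l : ℝ) (μ : ℝ → ℝ) : ℝ :=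
  (∫ r in Set.Iic (0:ℝ), (mMeas l μ (Set.Ici r) - 1)) +
  (∫ r in Set.Ioi (0:ℝ), mMeas l μ (Set.Ici r))

/-- Membership function of the trapezoidal fuzzy variable `(r1,r2,r3,r4)`. -/
noncomputable def trapMF (r1 r2 r3 r4 : ℝ) : ℝ → ℝ := fun x =>
  if r1 ≤ x ∧ x ≤ r2 then (x - r1) / (r2 - r1)
  else if r2 ≤ x ∧ x ≤ r3 then 1
  else if r3 ≤ x ∧ x ≤ r4 then (r4 - x) / (r4 - r3)
  else 0

/-- Membership function of the triangular fuzzy variable `(r1,r2,r4)`. -/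
noncomputable def triMF (r1 r2 r4 : ℝ) : ℝ → ℝ := fun x =>
  if r1 ≤ x ∧ x ≤ r2 then (x - r1) / (r2 - r1)
  else if r2 ≤ x ∧ x ≤ r4 then (r4 - x) / (r4 - r2)
  else 0

/-- Membership function of the trapezoidal fuzzy variable `(a−α, a, b, b+β)`. -/
noncomputable def trapMF2 (a b α β : ℝ) : ℝ → ℝ := fun x =>
  if a - α ≤ x ∧ x ≤ a then 1 - (a - x) / α
  else if a ≤ x ∧ x ≤ b then 1
  else if b ≤ x ∧ x ≤ b + β then 1 - (x - b) / β
  else 0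

/-- Membership function of the triangular fuzzy variable `(a−α, a, a+β)`. -/
noncomputable def triMF2 (a α β : ℝ) : ℝ → ℝ := fun x =>
  if a - α ≤ x ∧ x ≤ a then 1 - (a - x) / α
  else if a ≤ x ∧ x ≤ a + β then 1 - (x - a) / β
  else 0

/-! For `a ≤ b` the trapezoid rises linearly on `[a - α, a]` and falls linearly on `[b, b + β]`,
so `Pos (D ≤ t)` is the clamped ramp `(t - (a - α)) / α` and `Nec (D ≤ t) = 1 - Pos (D > t)` is
the clamped ramp `(t - b) / β` (a supremum over `(t, ∞)` that is approached, not attained).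
Hence `m_λ(D ≤ 1/r)` is affine in `λ`, and for `0 < p`, the ramp `r ↦ clamp ((1/r - p) / w)`
equals `1` on `(0, 1/(p + w)]`, `(1/r - p)/w` on `[1/(p + w), 1/p]` and `0` beyond, with integral
`log ((p + w) / p) / w`. -/

noncomputable def ramp (p w t : ℝ) : ℝ := max 0 (min 1 ((t - p) / w))

section Ramp

variable {p w : ℝ}

lemma ramp_nonneg (t : ℝ) : 0 ≤ ramp p w t := le_max_left _ _

lemma ramp_le_one (t : ℝ) : ramp p w t ≤ 1 := max_le zero_le_one (min_le_left _ _)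

lemma ramp_of_le (hw : 0 < w) {t : ℝ} (ht : t ≤ p) : ramp p w t = 0 :=
  max_eq_left (min_le_of_right_le (div_nonpos_of_nonpos_of_nonneg (by linarith) hw.le))

lemma ramp_of_ge (hw : 0 < w) {t : ℝ} (ht : p + w ≤ t) : ramp p w t = 1 := by
  have : 1 ≤ (t - p) / w := by rw [le_div_iff₀ hw]; linarith
  simp [ramp, min_eq_left this]

lemma ramp_of_mem_Icc (hw : 0 < w) {t : ℝ} (ht : t ∈ Icc p (p + w)) :
    ramp p w t = (t - p) / w := by
  have h0 : 0 ≤ (t - p) / w := div_nonneg (by linarith [ht.1]) hw.le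
  have h1 : (t - p) / w ≤ 1 := by rw [div_le_one hw]; linarith [ht.2]
  simp [ramp, min_eq_right h1, max_eq_right h0]

lemma monotone_ramp (hw : 0 ≤ w) : Monotone (ramp p w) := fun s t hst => by
  unfold ramp; gcongr

lemma continuous_ramp : Continuous (ramp p w) := by
  unfold ramp; fun_prop

end Ramp

lemma Pos_congr {μ ν : ℝ → ℝ} {A : Set ℝ} (h : EqOn μ ν A) : Pos μ A = Pos ν A :=
  congrArg sSup (image_congr h)

lemma Pos_eq_one_of_mem {μ : ℝ → ℝ} {A : Set ℝ} {c : ℝ} (hμ : ∀ x, μ x ≤ 1) (hc : c ∈ A)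
    (hμc : μ c = 1) : Pos μ A = 1 :=
  IsGreatest.csSup_eq ⟨⟨c, hc, hμc⟩, by rintro _ ⟨x, -, rfl⟩; exact hμ x⟩

lemma Monotone.Pos_Iic {f : ℝ → ℝ} (hf : Monotone f) (t : ℝ) : Pos f (Iic t) = f t :=
  IsGreatest.csSup_eq ⟨⟨t, self_mem_Iic, rfl⟩, by rintro _ ⟨x, hx, rfl⟩; exact hf hx⟩

lemma Antitone.Pos_Ioi {f : ℝ → ℝ} (hf : Antitone f) (hc : Continuous f) (t : ℝ) :
    Pos f (Ioi t) = f t :=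
  (isGLB_Ioi.isLUB_of_tendsto (hf.antitoneOn _) nonempty_Ioi
    (hc.continuousWithinAt.tendsto)).csSup_eq (nonempty_Ioi.image f)


section Trapezoid

variable {a b α β : ℝ}

lemma trapMF2_eqOn_Iic (hα : 0 < α) (hab : a ≤ b) :
    EqOn (trapMF2 a b α β) (ramp (a - α) α) (Iic a) := by
  intro x (hx : x ≤ a)
  unfold trapMF2
  split_ifs with h1 h2 h3
  · rw [ramp_of_mem_Icc hα ⟨h1.1, by linarith⟩]
    field_simp
    ring
  · exact absurd ⟨by linarith [h2.1], hx⟩ h1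
  · exact absurd ⟨by linarith [h3.1], hx⟩ h1
  · exact (ramp_of_le hα (le_of_not_ge fun h => h1 ⟨h, hx⟩)).symm

lemma trapMF2_eqOn_Ici (hβ : 0 < β) (hab : a ≤ b) :
    EqOn (trapMF2 a b α β) (fun x => 1 - ramp b β x) (Ici a) := by
  intro x (hx : a ≤ x)
  dsimp only
  unfold trapMF2
  split_ifs with h1 h2 h3
  · rw [show x = a by linarith [h1.2], ramp_of_le hβ hab]
    simp
  · rw [ramp_of_le hβ h2.2, sub_zero]
  · rw [ramp_of_mem_Icc hβ h3]
  · have hxb : b < x := lt_of_not_ge fun h => h2 ⟨hx, h⟩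
    have hxβ : b + β < x := lt_of_not_ge fun h => h3 ⟨hxb.le, h⟩
    rw [ramp_of_ge hβ hxβ.le, sub_self]

lemma trapMF2_le_one (hα : 0 < α) (hβ : 0 < β) (hab : a ≤ b) (x : ℝ) :
    trapMF2 a b α β x ≤ 1 := by
  rcases le_total x a with hx | hx
  · rw [trapMF2_eqOn_Iic hα hab hx]; exact ramp_le_one x
  · rw [trapMF2_eqOn_Ici hβ hab hx]; linarith [ramp_nonneg (p := b) (w := β) x]

lemma trapMF2_apply_self (hα : 0 < α) (hab : a ≤ b) : trapMF2 a b α β a = 1 := by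
  rw [trapMF2_eqOn_Iic hα hab self_mem_Iic, ramp_of_ge hα (by linarith)]

lemma Pos_trapMF2_Iic (hα : 0 < α) (hβ : 0 < β) (hab : a ≤ b) (t : ℝ) :
    Pos (trapMF2 a b α β) (Iic t) = ramp (a - α) α t := by
  rcases le_total t a with ht | ht
  · rw [Pos_congr ((trapMF2_eqOn_Iic hα hab).mono (Iic_subset_Iic.2 ht)),
      (monotone_ramp hα.le).Pos_Iic]
  · rw [Pos_eq_one_of_mem (trapMF2_le_one hα hβ hab) (mem_Iic.2 ht) (trapMF2_apply_self hα hab),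
      ramp_of_ge hα (by linarith)]

lemma Nec_trapMF2_Iic (hα : 0 < α) (hβ : 0 < β) (hab : a ≤ b) (t : ℝ) :
    Nec (trapMF2 a b α β) (Iic t) = ramp b β t := by
  rw [Nec, compl_Iic]
  rcases lt_or_ge t a with ht | ht
  · rw [Pos_eq_one_of_mem (trapMF2_le_one hα hβ hab) (mem_Ioi.2 ht) (trapMF2_apply_self hα hab),
      ramp_of_le hβ (by linarith), sub_self]
  · rw [Pos_congr ((trapMF2_eqOn_Ici hβ hab).mono (Ioi_subset_Ici ht)),
      Antitone.Pos_Ioi (fun s t hst => sub_le_sub_left (monotone_ramp hβ.le hst) 1)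
        (continuous_const.sub continuous_ramp), sub_sub_cancel]

end Trapezoid

section RampIntegral

variable {p w : ℝ}

lemma ramp_inv_eq_zero (hp : 0 < p) (hw : 0 < w) {r : ℝ} (hr : 1 / p < r) :
    ramp p w (1 / r) = 0 :=
  ramp_of_le hw ((one_div_lt hp ((one_div_pos.2 hp).trans hr)).1 hr).le

lemma integrableOn_ramp_inv (hp : 0 < p) (hw : 0 < w) :
    IntegrableOn (fun r => ramp p w (1 / r)) (Ioi 0) := by
  refine IntegrableOn.of_forall_sdiff_eq_zero (s := Ioc 0 (1 / p)) ?_ measurableSet_Ioi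
    fun r hr => ramp_inv_eq_zero hp hw (not_le.1 fun h => hr.2 ⟨hr.1, h⟩)
  refine Measure.integrableOn_of_bounded (M := 1) measure_Ioc_lt_top.ne
    (continuous_ramp.measurable.comp (measurable_const.div measurable_id)).aestronglyMeasurable
    (Filter.Eventually.of_forall fun r => ?_)
  rw [Real.norm_of_nonneg (ramp_nonneg _)]
  exact ramp_le_one _

lemma integral_ramp_inv (hp : 0 < p) (hw : 0 < w) :
    ∫ r in Ioi 0, ramp p w (1 / r) = Real.log ((p + w) / p) / w := by
  set c := 1 / (p + w)
  set d := 1 / p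
  have hc : 0 < c := by positivity
  have hcd : c < d := one_div_lt_one_div_of_lt hp (by linarith)
  have hf := integrableOn_ramp_inv hp hw
  have hsplit : ∫ r in Ioi 0, ramp p w (1 / r) =
      (∫ r in Ioc 0 c, ramp p w (1 / r)) + ∫ r in Ioc c d, ramp p w (1 / r) := by
    rw [setIntegral_eq_of_subset_of_forall_sdiff_eq_zero measurableSet_Ioi Ioc_subset_Ioi_self
      fun r hr => ramp_inv_eq_zero hp hw (not_le.1 fun h => hr.2 ⟨hr.1, h⟩),
      ← Ioc_union_Ioc_eq_Ioc hc.le hcd.le,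
      setIntegral_union (Ioc_disjoint_Ioc_of_le le_rfl) measurableSet_Ioc
        (hf.mono_set Ioc_subset_Ioi_self) (hf.mono_set fun r hr => hc.trans hr.1)]
  have hflat : ∫ r in Ioc 0 c, ramp p w (1 / r) = c := by
    rw [setIntegral_congr_fun measurableSet_Ioc (g := fun _ => 1) fun r hr =>
      ramp_of_ge hw ((le_one_div (by positivity) hr.1).2 hr.2),
      setIntegral_const, Real.volume_real_Ioc_of_le hc.le, sub_zero, smul_eq_mul, mul_one]
  have hslope : ∫ r in Ioc c d, ramp p w (1 / r) = (Real.log (d / c) - p * (d - c)) / w := by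
    rw [← intervalIntegral.integral_of_le hcd.le,
      intervalIntegral.integral_congr (g := fun r => (1 / r - p) / w) fun r hr =>
        have hr' : r ∈ Icc c d := uIcc_of_le hcd.le ▸ hr
        have hr0 : 0 < r := hc.trans_le hr'.1
        ramp_of_mem_Icc hw
          ⟨(le_one_div hp hr0).2 hr'.2, (one_div_le hr0 (by positivity)).2 hr'.1⟩,
      intervalIntegral.integral_div, intervalIntegral.integral_sub,
      integral_one_div_of_pos hc (hc.trans hcd)]
    · simp [mul_comm]
    · exact intervalIntegral.intervalIntegrable_one_div
        (fun r hr => (hc.trans_le (uIcc_of_le hcd.le ▸ hr : r ∈ Icc c d).1).ne') continuousOn_id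
    · exact intervalIntegrable_const
  have hdc : d / c = (p + w) / p := by simp only [c, d]; field_simp
  rw [hsplit, hflat, hslope, hdc]
  simp only [c, d]
  field_simp
  ring

end RampIntegral

theorem stmt_9_general (a b α β l : ℝ)
    (hα : 0 < α) (hβ : 0 < β) (hpos : 0 < a - α) (hab : a ≤ b) :
    (∫ r in Set.Ioi (0:ℝ), mMeas l (trapMF2 a b α β) (Set.Iic (1 / r))) =
      l / α * Real.log (a / (a - α)) + (1 - l) / β * Real.log ((b + β) / b) := by
  have hb : 0 < b := by linarith
  simp_rw [mMeas, Pos_trapMF2_Iic hα hβ hab, Nec_trapMF2_Iic hα hβ hab]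
  rw [integral_add ((integrableOn_ramp_inv hpos hα).const_mul l)
      ((integrableOn_ramp_inv hb hβ).const_mul (1 - l)),
    integral_const_mul, integral_const_mul, integral_ramp_inv hpos hα,
    integral_ramp_inv hb hβ, sub_add_cancel]
  ring

theorem stmt_9 (a b α β l : ℝ)
    (hα : 0 < α) (hβ : 0 < β) (hpos : 0 < a - α) (hab : a ≤ b)
    (hl : l ∈ Set.Icc (0:ℝ) 1) :
    (∫ r in Set.Ioi (0:ℝ), mMeas l (trapMF2 a b α β) (Set.Iic (1 / r))) =
      l / α * Real.log (a / (a - α)) + (1 - l) / β * Real.log ((b + β) / b) :=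
  stmt_9_general a b α β l hα hβ hpos hab
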